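/- arXiv:2407.20347 — 4 statements merged into one kernel-verified Lean document; each statement's English description precedes it below -/
import Mathlib

section
/- An element g ∈ GL_n(F_q) has multiplicative order q^n − 1 if and only if g acts transitively on the set of nonzero vectors of F_q^n. -/
/-!
Let `V = F^n`, so `V \ {0}` has `q^n - 1` elements. If `g` has order `q^n - 1`, the algebra
`F[g]` has at most `q^n` elements (Cayley–Hamilton) but contains `0` and the `q^n - 1` distinct
powers of `g`; so every nonzero element of `F[g]` is a power of `g`, hence invertible. Therefore
`g^i v = g^j v` with `v ≠ 0` forces `g^i = g^j`: the orbit of `v` under `⟨g⟩` has `q^n - 1`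
elements and is all of `V \ {0}`. Conversely, if `⟨g⟩` is transitive on `V \ {0}`, then, as `⟨g⟩`
is commutative, an element fixing one nonzero vector fixes all of them, so the orbit map
`⟨g⟩ → V \ {0}` is bijective and `g` has order `q^n - 1`.
-/

open Module

theorem ncard_range_pow {G : Type*} [LeftCancelMonoid G] (g : G) :
    (Set.range (g ^ · : ℕ → G)).ncard = orderOf g := by
  rw [← Submonoid.coe_powers, ← Nat.card_coe_set_eq, SetLike.coe_sort_coe,
    Nat.card_submonoidPowers]

theorem ncard_range_val_pow {M : Type*} [Monoid M] (u : Mˣ) :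
    (Set.range ((u : M) ^ · : ℕ → M)).ncard = orderOf u := by
  rw [← ncard_range_pow, ← Units.val_injective.injOn.ncard_image, ← Set.range_comp]
  simp only [Function.comp_def, Units.val_pow_eq_pow_val]

section PowerOrbit

variable {G X : Type*} [Group G] [MulAction G X] {g : G} {x : X}

theorem orderOf_eq_ncard_iff_forall_exists_pow_smul_eq {S : Set X} (hS : S.Finite)
    (hmaps : ∀ k : ℕ, g ^ k • x ∈ S) (hinj : ∀ i j : ℕ, g ^ i • x = g ^ j • x → g ^ i = g ^ j) :
    orderOf g = S.ncard ↔ ∀ y ∈ S, ∃ k : ℕ, g ^ k • x = y := by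
  have hinjOn : Set.InjOn (· • x) (Set.range (g ^ · : ℕ → G)) := by
    rintro _ ⟨i, rfl⟩ _ ⟨j, rfl⟩ h
    exact hinj i j h
  have hcard : (Set.range fun k : ℕ => g ^ k • x).ncard = orderOf g := by
    rw [← ncard_range_pow, ← hinjOn.ncard_image, ← Set.range_comp]
    rfl
  have hsub : Set.range (fun k : ℕ => g ^ k • x) ⊆ S := Set.range_subset_iff.2 hmaps
  rw [← hcard]
  constructor
  · intro h y hy
    rw [← Set.eq_of_subset_of_ncard_le hsub h.ge hS] at hy
    exact hy
  · intro h
    exact congrArg Set.ncard (hsub.antisymm h)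

theorem pow_smul_pow_smul_eq_of_pow_smul_eq {i j : ℕ} (h : g ^ i • x = g ^ j • x) (k : ℕ) :
    g ^ i • g ^ k • x = g ^ j • g ^ k • x := by
  rw [smul_smul, smul_smul, ← pow_add, ← pow_add, add_comm, add_comm j, pow_add, pow_add,
    mul_smul, mul_smul, h]

end PowerOrbit

section FiniteField

variable {F V : Type*} [Field F] [AddCommGroup V] [Module F V] [FiniteDimensional F V]

theorem finrank_adjoin_singleton_le (f : Module.End F V) :
    finrank F (Algebra.adjoin F {f}) ≤ finrank F V := by
  classical
  rw [← Subalgebra.finrank_toSubmodule,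
    ← Submodule.span_range_natDegree_eq_adjoin f.charpoly_monic f.aeval_self_charpoly]
  calc _ ≤ (Finset.image (f ^ ·) (Finset.range f.charpoly.natDegree)).card :=
        finrank_span_finset_le_card _
    _ ≤ finrank F V := Finset.card_image_le.trans (by simp [LinearMap.charpoly_natDegree])

variable [Finite F]

theorem natCard_adjoin_singleton_le (f : Module.End F V) :
    Nat.card (Algebra.adjoin F {f}) ≤ Nat.card V := by
  rw [Module.natCard_eq_pow_finrank (K := F), Module.natCard_eq_pow_finrank (K := F) (V := V)]
  exact Nat.pow_le_pow_right Nat.card_pos (finrank_adjoin_singleton_le f)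

variable [Nontrivial V]

theorem coe_adjoin_eq_insert_zero_range_pow {u : (Module.End F V)ˣ}
    (hu : orderOf u = Nat.card V - 1) :
    (Algebra.adjoin F {(u : Module.End F V)} : Set (Module.End F V)) =
      insert 0 (Set.range ((u : Module.End F V) ^ ·)) := by
  have : Finite V := Module.finite_of_finite F
  have : Finite (Module.End F V) := Module.finite_of_finite F
  have hsub : insert 0 (Set.range ((u : Module.End F V) ^ ·)) ⊆
      Algebra.adjoin F {(u : Module.End F V)} := by
    rintro _ (rfl | ⟨k, rfl⟩)
    · exact zero_mem _
    · exact pow_mem (Algebra.self_mem_adjoin_singleton F _) k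
  have hzero : (0 : Module.End F V) ∉ Set.range ((u : Module.End F V) ^ ·) := by
    rintro ⟨k, hk⟩
    exact (u ^ k).ne_zero hk
  refine (Set.eq_of_subset_of_ncard_le hsub ?_ (Set.toFinite _)).symm
  rw [Set.ncard_insert_of_notMem hzero, ncard_range_val_pow, hu, Nat.sub_add_cancel Nat.card_pos,
    ← Nat.card_coe_set_eq, SetLike.coe_sort_coe]
  exact natCard_adjoin_singleton_le _

theorem pow_eq_pow_of_pow_smul_eq {u : (Module.End F V)ˣ} (hu : orderOf u = Nat.card V - 1)
    {v : V} (hv : v ≠ 0) {i j : ℕ} (h : u ^ i • v = u ^ j • v) : u ^ i = u ^ j := by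
  have hmem : (u ^ i - u ^ j : Module.End F V) ∈ Algebra.adjoin F {(u : Module.End F V)} :=
    sub_mem (pow_mem (Algebra.self_mem_adjoin_singleton F _) i)
      (pow_mem (Algebra.self_mem_adjoin_singleton F _) j)
  have hker : (u ^ i - u ^ j : Module.End F V) v = 0 := sub_eq_zero.2 h
  rw [← SetLike.mem_coe, coe_adjoin_eq_insert_zero_range_pow hu] at hmem
  rcases hmem with hzero | ⟨k, hk⟩
  · exact Units.ext (by simpa using sub_eq_zero.1 hzero)
  · rw [← hk] at hker
    exact absurd ((smul_eq_zero_iff_eq (u ^ k)).1 hker) hv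

theorem orderOf_eq_natCard_sub_one_iff (u : (Module.End F V)ˣ) :
    orderOf u = Nat.card V - 1 ↔ ∀ v w : V, v ≠ 0 → w ≠ 0 → ∃ k : ℕ, u ^ k • v = w := by
  have : Finite V := Module.finite_of_finite F
  have hS : ({0}ᶜ : Set V).ncard = Nat.card V - 1 := by
    rw [Set.ncard_compl, Set.ncard_singleton]
  have hmaps (v : V) (hv : v ≠ 0) (k : ℕ) : u ^ k • v ∈ ({0}ᶜ : Set V) :=
    (smul_ne_zero_iff_ne _).2 hv
  rw [← hS]
  constructor
  · intro hu v w hv hw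
    exact (orderOf_eq_ncard_iff_forall_exists_pow_smul_eq (Set.toFinite _) (hmaps v hv)
      (fun i j => pow_eq_pow_of_pow_smul_eq (hu.trans hS) hv)).1 hu w hw
  · intro htrans
    obtain ⟨v, hv⟩ := exists_ne (0 : V)
    refine (orderOf_eq_ncard_iff_forall_exists_pow_smul_eq (Set.toFinite _) (hmaps v hv)
      (fun i j h => ?_)).2 (fun w hw => htrans v w hv hw)
    refine eq_of_smul_eq_smul (α := V) fun w => ?_
    rcases eq_or_ne w 0 with rfl | hw
    · simp
    · obtain ⟨k, rfl⟩ := htrans v w hv hw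
      exact pow_smul_pow_smul_eq_of_pow_smul_eq h k

end FiniteField

theorem orderOf_eq_iff_transitive_on_nonzero
    (q n : ℕ) (hn : 1 ≤ n) (F : Type*) [Field F] [Fintype F] (hq : Fintype.card F = q)
    (g : GL (Fin n) F) :
    orderOf g = q ^ n - 1 ↔
      ∀ v w : Fin n → F, v ≠ 0 → w ≠ 0 →
        ∃ k : ℕ, Matrix.mulVec ((g ^ k : GL (Fin n) F) : Matrix (Fin n) (Fin n) F) v = w := by
  have : Nonempty (Fin n) := ⟨⟨0, hn⟩⟩
  have hcard : Nat.card (Fin n → F) = q ^ n := by simp [hq]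
  have hpow (k : ℕ) (v : Fin n → F) :
      Matrix.mulVec ((g ^ k : GL (Fin n) F) : Matrix (Fin n) (Fin n) F) v =
        Matrix.GeneralLinearGroup.toLin g ^ k • v := by
    rw [← map_pow]; rfl
  simp only [hpow, ← hcard, ← (Matrix.GeneralLinearGroup.toLin).orderOf_eq g]
  exact orderOf_eq_natCard_sub_one_iff _
end

section
/- If g ∈ GL_n(F_q) has multiplicative order q^n − 1, then the characteristic polynomial of g is irreducible over F_q. -/
/-! Let `d` be the degree of the minimal polynomial of `g`, so that `F[g]` has `q ^ d` elements and
`d ≤ n`. The `q ^ n - 1` distinct powers of `g` are nonzero elements of `F[g]`, so `d = n` and every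
nonzero element of `F[g]` is a power of `g`, hence a unit. Thus `F[g]` is a field and the minimal
polynomial is irreducible; being a monic divisor of the characteristic polynomial of the same
degree, it equals it. -/

open Polynomial

section MonoidWithZero

variable {M₀ : Type*} [MonoidWithZero M₀] [Nontrivial M₀] [Finite M₀]

theorem isUnit_of_card_le_card_units_add_one (h : Nat.card M₀ ≤ Nat.card M₀ˣ + 1) {b : M₀}
    (hb : b ≠ 0) : IsUnit b := by
  classical
  have := Fintype.ofFinite M₀
  by_contra hu
  -- adjoining the non-unit `b` to the units still misses `0`
  let f : Option M₀ˣ → M₀ := fun u => u.elim b Units.val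
  have hf : Function.Injective f := by
    rintro (_ | u) (_ | v) huv <;> simp only [f, Option.elim] at huv
    · rfl
    · exact absurd (huv ▸ v.isUnit) hu
    · exact absurd (huv ▸ u.isUnit) hu
    · exact congrArg some (Units.ext huv)
  have h0 : (0 : M₀) ∉ Set.range f := by
    rintro ⟨_ | u, hu0⟩ <;> simp only [f, Option.elim] at hu0
    · exact hb hu0
    · exact not_isUnit_zero (hu0 ▸ u.isUnit)
  have := Fintype.card_lt_of_injective_of_notMem f hf h0
  rw [Fintype.card_eq_nat_card, Fintype.card_eq_nat_card, Finite.card_option] at this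
  omega

theorem isUnit_of_card_le_orderOf_add_one {a : M₀} (h : Nat.card M₀ ≤ orderOf a + 1) {b : M₀}
    (hb : b ≠ 0) : IsUnit b := by
  have ha : IsUnit a := by
    refine IsUnit.of_pow_eq_one (pow_orderOf_eq_one a) (Nat.pos_iff_ne_zero.mp ?_)
    have := Finite.one_lt_card (α := M₀)
    omega
  refine isUnit_of_card_le_card_units_add_one (h.trans ?_) hb
  rw [← ha.unit_spec, orderOf_units]
  exact Nat.add_le_add_right orderOf_le_card 1

end MonoidWithZero

theorem isDomain_of_card_le_orderOf_add_one {R : Type*} [Ring R] [Nontrivial R] [Finite R]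
    {a : R} (h : Nat.card R ≤ orderOf a + 1) : IsDomain R :=
  letI := DivisionRing.ofIsUnitOrEqZero fun b =>
    ((eq_or_ne b 0).imp_right (isUnit_of_card_le_orderOf_add_one h)).symm
  inferInstance

section Adjoin

variable {F B : Type*} [Field F] [Ring B] [Algebra F B] {x : B}

theorem Algebra.toSubmodule_adjoin_singleton_eq_span_pow (hx : IsIntegral F x) :
    Subalgebra.toSubmodule (Algebra.adjoin F {x}) =
      Submodule.span F (Set.range fun i : Fin (minpoly F x).natDegree => x ^ (i : ℕ)) := by
  refine le_antisymm (fun y hy => hx.mem_span_pow ?_) (Submodule.span_le.mpr ?_)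
  · rw [Subalgebra.mem_toSubmodule, Algebra.adjoin_singleton_eq_range_aeval] at hy
    obtain ⟨p, rfl⟩ := hy
    exact ⟨p, rfl⟩
  · rintro _ ⟨i, rfl⟩
    exact pow_mem (Algebra.self_mem_adjoin_singleton F x) _

theorem Algebra.natCard_adjoin_singleton (hx : IsIntegral F x) :
    Nat.card (Algebra.adjoin F {x}) = Nat.card F ^ (minpoly F x).natDegree := by
  have : Module.Finite F (Algebra.adjoin F {x}) := Algebra.finite_adjoin_simple_of_isIntegral hx
  change Nat.card (Subalgebra.toSubmodule (Algebra.adjoin F {x})) = _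
  rw [Module.natCard_eq_pow_finrank (K := F), Algebra.toSubmodule_adjoin_singleton_eq_span_pow hx,
    finrank_span_eq_card (linearIndependent_pow x), Fintype.card_fin]

theorem orderOf_mk_adjoin_singleton :
    orderOf (⟨x, Algebra.self_mem_adjoin_singleton F x⟩ : Algebra.adjoin F {x}) = orderOf x :=
  orderOf_injective (Algebra.adjoin F {x}).val.toMonoidHom Subtype.val_injective
    ⟨x, Algebra.self_mem_adjoin_singleton F x⟩ |>.symm

theorem minpoly_mk_adjoin_singleton :
    minpoly F (⟨x, Algebra.self_mem_adjoin_singleton F x⟩ : Algebra.adjoin F {x}) = minpoly F x :=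
  (minpoly.algHom_eq (Algebra.adjoin F {x}).val Subtype.val_injective _).symm

variable [Finite F] [Nontrivial B]

theorem orderOf_add_one_le_card_pow_natDegree_minpoly (hx : IsIntegral F x) :
    orderOf x + 1 ≤ Nat.card F ^ (minpoly F x).natDegree := by
  have : Module.Finite F (Algebra.adjoin F {x}) := Algebra.finite_adjoin_simple_of_isIntegral hx
  have : Finite (Algebra.adjoin F {x}) := Module.finite_of_finite F
  rw [← Algebra.natCard_adjoin_singleton hx, ← orderOf_mk_adjoin_singleton (F := F)]
  exact orderOf_lt_card _

theorem irreducible_minpoly_of_card_pow_natDegree_le (hx : IsIntegral F x)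
    (h : Nat.card F ^ (minpoly F x).natDegree ≤ orderOf x + 1) : Irreducible (minpoly F x) := by
  set A := Algebra.adjoin F {x}
  set a : A := ⟨x, Algebra.self_mem_adjoin_singleton F x⟩
  have : Module.Finite F A := Algebra.finite_adjoin_simple_of_isIntegral hx
  have : Finite A := Module.finite_of_finite F
  have : IsDomain A := by
    rw [← Algebra.natCard_adjoin_singleton hx, ← orderOf_mk_adjoin_singleton (F := F)] at h
    exact isDomain_of_card_le_orderOf_add_one h
  rw [← minpoly_mk_adjoin_singleton]
  exact minpoly.irreducible (.of_finite F a)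

end Adjoin

theorem Matrix.charpoly_eq_minpoly_of_card_le_natDegree {F ι : Type*} [Field F] [Fintype ι]
    [DecidableEq ι] (M : Matrix ι ι F) (h : Fintype.card ι ≤ (minpoly F M).natDegree) :
    M.charpoly = minpoly F M :=
  eq_of_monic_of_dvd_of_natDegree_le (minpoly.monic (.of_finite F M)) M.charpoly_monic
    M.minpoly_dvd_charpoly (M.charpoly_natDegree_eq_dim.trans_le h)

theorem singer_cycle_charpoly_irreducible
    (q n : ℕ) (hn : 1 ≤ n) (F : Type*) [Field F] [Fintype F] (hq : Fintype.card F = q)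
    (g : GL (Fin n) F) (hg : orderOf g = q ^ n - 1) :
    Irreducible (Matrix.charpoly (g : Matrix (Fin n) (Fin n) F)) := by
  have : Nonempty (Fin n) := ⟨⟨0, hn⟩⟩
  set M : Matrix (Fin n) (Fin n) F := ↑g
  have hM : IsIntegral F M := .of_finite F M
  have hcard : Nat.card F = q := Nat.card_eq_fintype_card.trans hq
  have hq1 : 1 < q := hq ▸ Fintype.one_lt_card
  have hord : orderOf M + 1 = q ^ n := by
    rw [orderOf_units, hg]
    exact Nat.sub_add_cancel (Nat.one_le_pow _ _ (by omega))
  have hdeg_le : (minpoly F M).natDegree ≤ n := by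
    simpa using natDegree_le_of_dvd M.minpoly_dvd_charpoly M.charpoly_monic.ne_zero
  have hdeg_ge : n ≤ (minpoly F M).natDegree := by
    have := orderOf_add_one_le_card_pow_natDegree_minpoly hM
    rwa [hord, hcard, Nat.pow_le_pow_iff_right hq1] at this
  rw [M.charpoly_eq_minpoly_of_card_le_natDegree (by simpa using hdeg_ge)]
  refine irreducible_minpoly_of_card_pow_natDegree_le hM ?_
  rw [hord, hcard]
  exact Nat.pow_le_pow_right (by omega) hdeg_le
end

section
/- If g ∈ GL_n(F_q) has multiplicative order q^n − 1, then det(g) is a generator of the cyclic group F_q^×. -/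
/-!
The `F`-algebra `F[g] ≅ F[X] ⧸ (minpoly g)` has at most `q ^ n` elements, yet contains the
element `g` of order `q ^ n - 1`. Hence it is a field with `q ^ n` elements whose unit group is
generated by `g`, and `minpoly g = charpoly g`. Then `det g = ± (charpoly g)(0)` is the norm of `g`
from `F[g]` down to `F`, and the norm of an extension of finite fields is surjective on unit groups,
so it maps a generator to a generator.
-/

open Matrix Polynomial

theorem isField_of_orderOf_add_one_eq_card {A : Type*} [CommRing A] [Finite A] {x : A}
    (hx : orderOf x + 1 = Nat.card A) : IsField A := by
  classical
  have := Fintype.ofFinite A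
  have : Nontrivial A := by
    by_contra h
    have := not_nontrivial_iff_subsingleton.mp h
    rw [Subsingleton.elim x 1, orderOf_one, Nat.card_unique] at hx
    omega
  have hA := Finite.one_lt_card (α := A)
  have hx_le : orderOf x ≤ Nat.card Aˣ :=
    orderOf_units (y := (orderOf_pos_iff.mp (by omega : 0 < orderOf x)).unit) ▸
      orderOf_le_card
  by_contra hfield
  obtain ⟨a, ha0, ha⟩ := Ring.exists_not_isUnit_of_not_isField hfield
  have hunits : Nat.card Aˣ ≤ ((Finset.univ.erase 0).erase a).card := by
    rw [Nat.card_eq_fintype_card, ← Finset.card_univ]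
    refine Finset.card_le_card_of_injOn Units.val (fun v _ => ?_) Units.val_injective.injOn
    simp only [Finset.coe_erase, Finset.coe_univ, Set.mem_sdiff, Set.mem_univ,
      Set.mem_singleton_iff]
    exact ⟨⟨trivial, v.ne_zero⟩, fun h => ha (h ▸ v.isUnit)⟩
  rw [Finset.card_erase_of_mem (by simpa using ha0), Finset.card_erase_of_mem (Finset.mem_univ _),
    Finset.card_univ, ← Nat.card_eq_fintype_card] at hunits
  omega

theorem zpowers_eq_top_of_orderOf_add_one_eq_card {G₀ : Type*} [GroupWithZero G₀] [Finite G₀]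
    (u : G₀ˣ) (hu : orderOf (u : G₀) + 1 = Nat.card G₀) : Subgroup.zpowers u = ⊤ := by
  refine Subgroup.eq_top_of_card_eq _ ?_
  rw [Nat.card_zpowers, ← orderOf_units, Nat.card_units]
  omega

theorem FiniteField.zpowers_unitsMap_norm_eq_top {K L : Type*} [Field K] [Field L] [Algebra K L]
    [Finite L] {x : Lˣ} (hx : Subgroup.zpowers x = ⊤) :
    Subgroup.zpowers (Units.map (Algebra.norm K : L →* K) x) = ⊤ := by
  rw [← MonoidHom.map_zpowers, hx, ← MonoidHom.range_eq_map, MonoidHom.range_eq_top]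
  exact unitsMap_norm_surjective K L

namespace AdjoinRoot

variable {K : Type*} [Field K] {f : K[X]}

theorem irreducible_of_isField (hf : f ≠ 0) (h : IsField (AdjoinRoot f)) : Irreducible f :=
  Ideal.irreducible_of_isMaximal_span_singleton hf (Ideal.Quotient.maximal_of_isField _ h)

theorem norm_root (hf : f.Monic) : Algebra.norm K (root f) = (-1) ^ f.natDegree * f.coeff 0 := by
  have := Algebra.PowerBasis.norm_gen_eq_coeff_zero_minpoly (powerBasis hf.ne_zero)
  rwa [minpoly_powerBasis_gen_of_monic hf, powerBasis_dim, powerBasis_gen] at this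

theorem orderOf_root_minpoly {S : Type*} [Ring S] [Algebra K S] (x : S) :
    orderOf (root (minpoly K x)) = orderOf x := by
  refine orderOf_eq_orderOf_iff.mpr fun k => ?_
  rw [← sub_eq_zero, ← sub_eq_zero (a := x ^ k), ← mk_X, ← map_pow, ← map_one (mk _),
    ← map_sub, mk_eq_zero, minpoly.dvd_iff]
  simp

theorem finite_of_ne_zero [Finite K] (hf : f ≠ 0) : Finite (AdjoinRoot f) :=
  have := (powerBasis hf).finite
  Module.finite_of_finite K

theorem natCard_eq (hf : f ≠ 0) : Nat.card (AdjoinRoot f) = Nat.card K ^ f.natDegree := by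
  have := (powerBasis hf).finite
  rw [Module.natCard_eq_pow_finrank (K := K), (powerBasis hf).finrank, powerBasis_dim]

theorem natDegree_eq_of_orderOf_root [Finite K] {n : ℕ} (hf : 0 < f.natDegree)
    (hn : f.natDegree ≤ n) (h : orderOf (root f) = Nat.card K ^ n - 1) : f.natDegree = n := by
  have hf₀ : f ≠ 0 := ne_zero_of_natDegree_gt hf
  have := AdjoinRoot.nontrivial f (by rw [degree_eq_natDegree hf₀]; exact_mod_cast hf.ne')
  have := finite_of_ne_zero hf₀
  have hlt := orderOf_lt_card (root f)
  rw [h, natCard_eq hf₀] at hlt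
  have : Nat.card K ^ n ≤ Nat.card K ^ f.natDegree := by omega
  exact le_antisymm hn ((Nat.pow_le_pow_iff_right Finite.one_lt_card).mp this)

end AdjoinRoot

namespace Matrix

variable {K ι : Type*} [Field K] [Fintype ι] [DecidableEq ι]

theorem natDegree_minpoly_le (M : Matrix ι ι K) : (minpoly K M).natDegree ≤ Fintype.card ι :=
  M.charpoly_natDegree_eq_dim ▸
    natDegree_le_of_dvd M.minpoly_dvd_charpoly M.charpoly_monic.ne_zero

theorem charpoly_eq_minpoly_of_natDegree_eq (M : Matrix ι ι K)
    (h : (minpoly K M).natDegree = Fintype.card ι) : M.charpoly = minpoly K M :=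
  eq_of_monic_of_dvd_of_natDegree_le (minpoly.monic (.of_finite K M)) M.charpoly_monic
    M.minpoly_dvd_charpoly (by rw [M.charpoly_natDegree_eq_dim, h])

theorem det_eq_norm_root_minpoly (M : Matrix ι ι K)
    (h : (minpoly K M).natDegree = Fintype.card ι) :
    M.det = Algebra.norm K (AdjoinRoot.root (minpoly K M)) := by
  rw [AdjoinRoot.norm_root (minpoly.monic (.of_finite K M)),
    ← M.charpoly_eq_minpoly_of_natDegree_eq h, det_eq_sign_charpoly_coeff,
    charpoly_natDegree_eq_dim]

end Matrix

theorem singer_cycle_det_generates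
    (q n : ℕ) (hn : 1 ≤ n) (F : Type*) [Field F] [Fintype F] (hq : Fintype.card F = q)
    (g : GL (Fin n) F) (hg : orderOf g = q ^ n - 1) :
    ∀ u : Fˣ, u ∈ Subgroup.zpowers (Matrix.GeneralLinearGroup.det g) := by
  have : NeZero n := ⟨by omega⟩
  set M : Matrix (Fin n) (Fin n) F := ↑g
  have hM : IsIntegral F M := .of_finite F M
  have hp : minpoly F M ≠ 0 := minpoly.ne_zero hM
  have := AdjoinRoot.finite_of_ne_zero hp
  have hq' : Nat.card F = q := Nat.card_eq_fintype_card.trans hq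
  have hqn : 1 < q ^ n := Nat.one_lt_pow (by omega) (hq ▸ Fintype.one_lt_card)
  have hroot : orderOf (AdjoinRoot.root (minpoly F M)) = q ^ n - 1 := by
    rw [AdjoinRoot.orderOf_root_minpoly, orderOf_units, hg]
  have hdeg : (minpoly F M).natDegree = n :=
    AdjoinRoot.natDegree_eq_of_orderOf_root (minpoly.natDegree_pos hM)
      (by simpa using M.natDegree_minpoly_le) (hq' ▸ hroot)
  have hcard :
      orderOf (AdjoinRoot.root (minpoly F M)) + 1 = Nat.card (AdjoinRoot (minpoly F M)) := by
    rw [hroot, AdjoinRoot.natCard_eq hp, hdeg, hq']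
    omega
  have : Fact (Irreducible (minpoly F M)) :=
    ⟨AdjoinRoot.irreducible_of_isField hp (isField_of_orderOf_add_one_eq_card hcard)⟩
  let u := (orderOf_pos_iff.mp (by omega : 0 < orderOf (AdjoinRoot.root (minpoly F M)))).unit
  have hdet : Matrix.GeneralLinearGroup.det g = Units.map (Algebra.norm F) u :=
    Units.ext (M.det_eq_norm_root_minpoly (by rw [Fintype.card_fin, hdeg]))
  rw [hdet, FiniteField.zpowers_unitsMap_norm_eq_top
    (zpowers_eq_top_of_orderOf_add_one_eq_card u hcard)]
  exact fun _ => Subgroup.mem_top _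
end

section
/- If g ∈ GL_n(F_q) stabilizes a nontrivial proper subspace W of F_q^n, then g admits a minimum-length reflection factorization g = t_1 ⋯ t_k (with k = n − dim fix(g)) in which every factor t_i stabilizes W; consequently g is not strongly quasi-Coxeter. -/
open Matrix

def IsReflection {n : ℕ} {F : Type*} [Field F] (t : GL (Fin n) F) : Prop :=
  t ≠ 1 ∧ ∃ H : Submodule F (Fin n → F), Module.finrank F H = n - 1 ∧
    ∀ v ∈ H, Matrix.mulVec (t : Matrix (Fin n) (Fin n) F) v = v

def fixSpace {n : ℕ} {F : Type*} [Field F] (g : GL (Fin n) F) : Submodule F (Fin n → F) :=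
  LinearMap.eqLocus (Matrix.mulVecLin (g : Matrix (Fin n) (Fin n) F)) LinearMap.id

/-!
Let `g ≠ 1` stabilize `W` and let `U` be its fixed space. Choose `v ∉ U`, inside `W` unless
`W ≤ U`, and a linear form `f` vanishing on `U` with `f (g v) = 1` and `f v ≠ 0`. The map
`t : x ↦ x + f x • (v - g v)` is invertible since `1 + f (v - g v) = f v`, fixes `ker f ⊇ U`,
sends `g v` to `v`, and stabilizes `W`, because either `v - g v ∈ W` or `f` vanishes on `W ≤ U`.
Thus `t g` fixes `U ⊕ ⟨v⟩`, and induction on the codimension of the fixed space writes `g` as a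
product of `codim U` reflections stabilizing `W`. These generate a subgroup of the stabilizer of
`W`, which is proper: a transvection pushes a nonzero vector of `W` out of `W`.
-/

open Module LinearMap MulAction
open scoped Pointwise

theorem Module.exists_dual_apply_eq_one_and_apply_ne_zero {K V : Type*} [Field K]
    [AddCommGroup V] [Module K V] {a b : V} (ha : a ≠ 0) (hb : b ≠ 0) :
    ∃ f : Dual K V, f a = 1 ∧ f b ≠ 0 := by
  obtain ⟨f, hfa⟩ := Projective.exists_dual_eq_one K ha
  by_cases hfb : f b = 0
  · obtain ⟨g, hgb⟩ := Projective.exists_dual_eq_one K hb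
    refine ⟨f + g - g a • f, ?_, ?_⟩ <;> simp [hfa, hfb, hgb]
  · exact ⟨f, hfa, hfb⟩

namespace LinearEquiv

variable {K V : Type*} [Field K] [AddCommGroup V] [Module K V]

theorem apply_mem_of_mem_stabilizer {e : V ≃ₗ[K] V} {W : Submodule K V}
    (he : e ∈ stabilizer (V ≃ₗ[K] V) W) {x : V} (hx : x ∈ W) : e x ∈ W := by
  rw [← mem_stabilizer_iff.1 he]
  exact Submodule.smul_mem_pointwise_smul x e W hx

theorem stabilizer_submodule_ne_top {W : Submodule K V} (hW₀ : W ≠ ⊥) (hW : W ≠ ⊤) :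
    stabilizer (V ≃ₗ[K] V) W ≠ ⊤ := by
  obtain ⟨w, hwW, hw₀⟩ := W.exists_mem_ne_zero_of_ne_bot hW₀
  obtain ⟨v, hvW⟩ := SetLike.exists_not_mem_of_ne_top W hW
  have hw : w ∉ K ∙ v := by
    intro hwv
    obtain ⟨a, rfl⟩ := Submodule.mem_span_singleton.1 hwv
    have ha : a ≠ 0 := by rintro rfl; simp at hw₀
    exact hvW ((W.smul_mem_iff ha).1 hwW)
  obtain ⟨f, hfw, hf⟩ := Submodule.exists_dual_map_eq_bot_of_notMem hw inferInstance
  have hfv : f v = 0 := by simpa [Submodule.map_span] using hf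
  intro htop
  have hmem := apply_mem_of_mem_stabilizer (htop ▸ Subgroup.mem_top (transvection hfv)) hwW
  rw [transvection.apply, W.add_mem_iff_right hwW, W.smul_mem_iff hfw] at hmem
  exact hvW hmem

variable [FiniteDimensional K V]

theorem mem_stabilizer_submodule_of_forall_apply_mem {e : V ≃ₗ[K] V} {W : Submodule K V}
    (h : ∀ x ∈ W, e x ∈ W) : e ∈ stabilizer (V ≃ₗ[K] V) W := by
  rw [Submodule.mem_stabilizer_submodule_iff_map_eq]
  refine Submodule.eq_of_le_of_finrank_eq ?_ (LinearEquiv.finrank_map_eq e W)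
  rintro _ ⟨x, hx, rfl⟩
  exact h x hx

theorem finrank_quotient_fixedSubmodule_eq_zero_iff {e : V ≃ₗ[K] V} :
    finrank K (V ⧸ e.fixedSubmodule) = 0 ↔ e = 1 := by
  rw [Module.finrank_zero_iff, Submodule.Quotient.subsingleton_iff, fixedSubmodule_eq_top_iff]
  rfl

theorem fixedSubmodule_dilatransvection_mul (e : V ≃ₗ[K] V) {f : Dual K V} {v : V}
    (h : IsUnit (1 + f (v - e v))) (hv : v ∉ e.fixedSubmodule) (hf : e.fixedSubmodule ≤ ker f)
    (hfv : f (e v) = 1) :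
    (dilatransvection h * e).fixedSubmodule = e.fixedSubmodule ⊔ K ∙ v := by
  symm
  refine Submodule.eq_of_le_of_finrank_le ?_ ?_
  · refine sup_le (fun x hx => ?_) ((Submodule.span_singleton_le_iff_mem _ _).2 ?_)
    · have hex : e x = x := mem_fixedSubmodule_iff.1 hx
      simp [hex, LinearMap.transvection.apply, mem_ker.1 (hf hx)]
    · simp [LinearMap.transvection.apply, hfv]
  · rw [Submodule.finrank_sup_span_singleton hv, add_comm]
    exact finrank_fixedSubmodule_dilatransvection_mul_le e _ dilatransvection_mem_dilatransvections

theorem exists_dilatransvection_mem_stabilizer_of_ne_one {e : V ≃ₗ[K] V} {W : Submodule K V}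
    (hW : e ∈ stabilizer (V ≃ₗ[K] V) W) (he : e ≠ 1) :
    ∃ t ∈ dilatransvections K V, t ∈ stabilizer (V ≃ₗ[K] V) W ∧
      finrank K (V ⧸ (t * e).fixedSubmodule) + 1 = finrank K (V ⧸ e.fixedSubmodule) := by
  set U := e.fixedSubmodule
  obtain ⟨v, hvU, hvW⟩ : ∃ v ∉ U, W ≤ U ∨ v - e v ∈ W := by
    by_cases hWU : W ≤ U
    · obtain ⟨v, hv⟩ := SetLike.exists_not_mem_of_ne_top U (mt fixedSubmodule_eq_top_iff.1 he)
      exact ⟨v, hv, Or.inl hWU⟩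
    · obtain ⟨v, hvW, hvU⟩ := Set.not_subset.1 hWU
      exact ⟨v, hvU, Or.inr (W.sub_mem hvW (apply_mem_of_mem_stabilizer hW hvW))⟩
  have hevU : e v ∉ U := fun h =>
    hvU (mem_fixedSubmodule_iff.2 (e.injective (mem_fixedSubmodule_iff.1 h)))
  obtain ⟨φ, hφev, hφv⟩ := exists_dual_apply_eq_one_and_apply_ne_zero (K := K)
    (mt (Submodule.Quotient.mk_eq_zero U).1 hevU) (mt (Submodule.Quotient.mk_eq_zero U).1 hvU)
  set f := φ ∘ₗ U.mkQ
  have hf : U ≤ ker f := fun x hx => by simp [f, (Submodule.Quotient.mk_eq_zero U).2 hx]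
  have h : IsUnit (1 + f (v - e v)) := by simpa [f, hφev] using hφv
  refine ⟨dilatransvection h, dilatransvection_mem_dilatransvections,
    mem_stabilizer_submodule_of_forall_apply_mem fun x hx => ?_, ?_⟩
  · rw [dilatransvection.apply]
    refine W.add_mem hx ?_
    rcases hvW with hWU | hvW
    · simp [mem_ker.1 (hf (hWU hx))]
    · exact W.smul_mem _ hvW
  · rw [fixedSubmodule_dilatransvection_mul e h hvU hf hφev]
    exact finrank_quotient_sup_span_singleton hvU

theorem exists_dilatransvections_prod_eq_of_mem_stabilizer {W : Submodule K V} (e : V ≃ₗ[K] V)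
    (hW : e ∈ stabilizer (V ≃ₗ[K] V) W) :
    ∃ l : List (V ≃ₗ[K] V), l.length = finrank K (V ⧸ e.fixedSubmodule) ∧
      (∀ t ∈ l, t ∈ dilatransvections K V ∧ t ≠ 1 ∧ t ∈ stabilizer (V ≃ₗ[K] V) W) ∧
      l.prod = e := by
  induction hk : finrank K (V ⧸ e.fixedSubmodule) generalizing e with
  | zero =>
    exact ⟨[], rfl, by simp, (finrank_quotient_fixedSubmodule_eq_zero_iff.1 hk).symm⟩
  | succ k ih =>
    have he : e ≠ 1 := fun h => by
      have := finrank_quotient_fixedSubmodule_eq_zero_iff.2 h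
      omega
    obtain ⟨t, ht, htW, htk⟩ := exists_dilatransvection_mem_stabilizer_of_ne_one hW he
    obtain ⟨l, hl, hlW, hle⟩ := ih (t * e) (mul_mem htW hW) (by omega)
    have ht1 : t ≠ 1 := by
      rintro rfl
      rw [one_mul] at htk
      omega
    refine ⟨t⁻¹ :: l, by simp [hl], ?_, by simp [hle]⟩
    simp only [List.forall_mem_cons]
    exact ⟨⟨inv_mem_dilatransvections_iff.2 ht, inv_ne_one.2 ht1, inv_mem htW⟩, hlW⟩

end LinearEquiv

namespace Matrix.GeneralLinearGroup

variable {ι R : Type*} [Fintype ι] [DecidableEq ι] [CommRing R]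

def mulVecEquiv : GL ι R ≃* ((ι → R) ≃ₗ[R] (ι → R)) :=
  toLin.trans (LinearMap.GeneralLinearGroup.generalLinearEquiv R (ι → R))

@[simp]
theorem mulVecEquiv_apply (g : GL ι R) (v : ι → R) :
    mulVecEquiv g v = (g : Matrix ι ι R) *ᵥ v :=
  rfl

theorem mulVecEquiv_mem_stabilizer_iff {g : GL ι R} {W : Submodule R (ι → R)} :
    mulVecEquiv g ∈ stabilizer ((ι → R) ≃ₗ[R] (ι → R)) W ↔
      W.map (mulVecLin (g : Matrix ι ι R)) = W :=
  Iff.rfl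

end Matrix.GeneralLinearGroup

open Matrix.GeneralLinearGroup

section ReflectionFactorization

variable {n : ℕ} {F : Type*} [Field F]

theorem fixSpace_eq_fixedSubmodule (g : GL (Fin n) F) :
    fixSpace g = (mulVecEquiv g).fixedSubmodule := by
  ext v
  simp [fixSpace]

theorem isReflection_of_mulVecEquiv_mem_dilatransvections {t : GL (Fin n) F}
    (ht : mulVecEquiv t ∈ LinearEquiv.dilatransvections F (Fin n → F)) (ht1 : t ≠ 1) :
    IsReflection t := by
  have hne : (mulVecEquiv t).fixedSubmodule ≠ ⊤ := by
    rw [Ne, LinearEquiv.fixedSubmodule_eq_top_iff, ← LinearEquiv.one_eq_refl,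
      ← map_one mulVecEquiv]
    exact mulVecEquiv.injective.ne ht1
  have hlt := Submodule.finrank_lt hne
  have hle := LinearEquiv.finrank_le_one_add_finrank_fixedSubmodule_dilatransvection _ ht
  rw [finrank_fin_fun] at hlt hle
  refine ⟨ht1, fixSpace t, ?_, fun v hv => hv⟩
  rw [fixSpace_eq_fixedSubmodule]
  omega

theorem exists_isReflection_prod_eq_of_map_eq {g : GL (Fin n) F} {W : Submodule F (Fin n → F)}
    (hstab : W.map (mulVecLin (g : Matrix (Fin n) (Fin n) F)) = W) :
    ∃ l : List (GL (Fin n) F), l.length = n - finrank F (fixSpace g) ∧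
      (∀ t ∈ l, IsReflection t) ∧ l.prod = g ∧
      ∀ t ∈ l, W.map (mulVecLin (t : Matrix (Fin n) (Fin n) F)) = W := by
  obtain ⟨l, hlen, hl, hprod⟩ := LinearEquiv.exists_dilatransvections_prod_eq_of_mem_stabilizer
    (mulVecEquiv g) (mulVecEquiv_mem_stabilizer_iff.2 hstab)
  refine ⟨l.map mulVecEquiv.symm, ?_, ?_, ?_, ?_⟩
  · rw [List.length_map, hlen, Submodule.finrank_quotient, finrank_fin_fun,
      fixSpace_eq_fixedSubmodule]
  · simp only [List.forall_mem_map]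
    intro e he
    obtain ⟨hd, h1, -⟩ := hl e he
    exact isReflection_of_mulVecEquiv_mem_dilatransvections (by simpa using hd) (by simpa using h1)
  · rw [← map_list_prod, hprod, MulEquiv.symm_apply_apply]
  · simp only [List.forall_mem_map]
    intro e he
    exact mulVecEquiv_mem_stabilizer_iff.1 (by simpa using (hl e he).2.2)

theorem closure_ne_top_of_forall_map_eq {W : Submodule F (Fin n → F)} (hW₀ : W ≠ ⊥)
    (hW : W ≠ ⊤) (S : Set (GL (Fin n) F))
    (hS : ∀ t ∈ S, W.map (mulVecLin (t : Matrix (Fin n) (Fin n) F)) = W) :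
    Subgroup.closure S ≠ ⊤ := by
  intro htop
  refine LinearEquiv.stabilizer_submodule_ne_top hW₀ hW (eq_top_iff.2 fun e _ => ?_)
  have hle : Subgroup.closure S ≤ (stabilizer _ W).comap mulVecEquiv.toMonoidHom :=
    (Subgroup.closure_le _).2 fun t ht => mulVecEquiv_mem_stabilizer_iff.2 (hS t ht)
  have he := hle (htop ▸ Subgroup.mem_top (mulVecEquiv.symm e))
  rwa [Subgroup.mem_comap, MulEquiv.coe_toMonoidHom, MulEquiv.apply_symm_apply] at he

end ReflectionFactorization

theorem reducible_not_strongly_quasi_coxeter_general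
    (n : ℕ) (F : Type*) [Field F]
    (g : GL (Fin n) F) (W : Submodule F (Fin n → F)) (hW0 : W ≠ ⊥) (hWtop : W ≠ ⊤)
    (hstab : W.map (Matrix.mulVecLin (g : Matrix (Fin n) (Fin n) F)) = W) :
    (∃ l : List (GL (Fin n) F),
        l.length = n - Module.finrank F (fixSpace g) ∧
        (∀ t ∈ l, IsReflection t) ∧ l.prod = g ∧
        ∀ t ∈ l, W.map (Matrix.mulVecLin (t : Matrix (Fin n) (Fin n) F)) = W) ∧
    ¬ (∀ l : List (GL (Fin n) F),
        l.length = n - Module.finrank F (fixSpace g) →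
        (∀ t ∈ l, IsReflection t) → l.prod = g →
        Subgroup.closure {t | t ∈ l} = (⊤ : Subgroup (GL (Fin n) F))) := by
  obtain ⟨l, hlen, hrefl, hprod, hW⟩ := exists_isReflection_prod_eq_of_map_eq hstab
  exact ⟨⟨l, hlen, hrefl, hprod, hW⟩,
    fun h => closure_ne_top_of_forall_map_eq hW0 hWtop _ hW (h l hlen hrefl hprod)⟩

theorem reducible_not_strongly_quasi_coxeter
    (q n : ℕ) (hn : 1 ≤ n) (F : Type*) [Field F] [Fintype F] (hq : Fintype.card F = q)
    (g : GL (Fin n) F) (W : Submodule F (Fin n → F)) (hW0 : W ≠ ⊥) (hWtop : W ≠ ⊤)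
    (hstab : W.map (Matrix.mulVecLin (g : Matrix (Fin n) (Fin n) F)) = W) :
    (∃ l : List (GL (Fin n) F),
        l.length = n - Module.finrank F (fixSpace g) ∧
        (∀ t ∈ l, IsReflection t) ∧ l.prod = g ∧
        ∀ t ∈ l, W.map (Matrix.mulVecLin (t : Matrix (Fin n) (Fin n) F)) = W) ∧
    ¬ (∀ l : List (GL (Fin n) F),
        l.length = n - Module.finrank F (fixSpace g) →
        (∀ t ∈ l, IsReflection t) → l.prod = g →
        Subgroup.closure {t | t ∈ l} = (⊤ : Subgroup (GL (Fin n) F))) :=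
  reducible_not_strongly_quasi_coxeter_general n F g W hW0 hWtop hstab
end
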